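/- arXiv:1205.7037 — 2 statements merged into one kernel-verified Lean document; each statement's English description precedes it below -/
import Mathlib

section
/- Fix real numbers β and M and an integer n ≥ 0. For ε ∈ ℝ, ε ≠ 0, set q = −e^{ε}, b = −e^{βε}, and define A_n^{(2)}(ε) = M(q−1) q^{3(2−n)−1} (1 − q^{−2}) (q^{n−2};q)_5 (bq^n;q)_1 / (q;q)_2. Then as ε → 0 (ε ≠ 0), A_n^{(2)}(ε)/ε^3 tends to 8M n(n+2)(n−2) if n is even, and to −8M(n+1)(n−1)(n+β) if n is odd. -/
/-!
With `q = -e^ε`, a factor `1 - q^m` tends to `2` when `m` is odd, while for even `m` it equals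
`1 - e^{mε} ~ -mε`; likewise `1 - b q^n = 1 + (-1)^n e^{(n+β)ε}`. So `1 - q^{-2}` and, whatever the
parity of `n`, exactly three of the six factors of `(q^{n-2};q)_5 (bq^n;q)_1` vanish to first order,
against one factor of `(q;q)_2 = (1 - q)(1 - q^2)`, and `A_n^{(2)}/ε³` tends to the product of the
leading coefficients.
-/

/-- The q-shifted factorial `(a;q)_n = ∏_{k=0}^{n-1} (1 - a q^k)`. -/
noncomputable def qPoch (q a : ℝ) (n : ℕ) : ℝ :=
  ∏ k ∈ Finset.range n, (1 - a * q ^ k)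

open Filter Topology Real

lemma qPoch_one (q a : ℝ) : qPoch q a 1 = 1 - a := by
  simp [qPoch]

lemma qPoch_zpow {q : ℝ} (hq : q ≠ 0) (j : ℤ) (N : ℕ) :
    qPoch q (q ^ j) N = ∏ k ∈ Finset.range N, (1 - q ^ (j + k)) := by
  simp only [qPoch, zpow_add₀ hq, zpow_natCast]

noncomputable def A2 (β M : ℝ) (n : ℕ) (ε : ℝ) : ℝ :=
  let q : ℝ := -exp ε
  let b : ℝ := -exp (β * ε)
  M * (q - 1) * q ^ (3 * (2 - (n : ℤ)) - 1) * (1 - q ^ (-2 : ℤ)) *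
    qPoch q (q ^ ((n : ℤ) - 2)) 5 * qPoch q (b * q ^ n) 1 / qPoch q q 2

lemma A2_eq (β M : ℝ) (n : ℕ) (ε : ℝ) : A2 β M n ε =
    M * (-exp ε - 1) * (-exp ε) ^ (3 * (2 - (n : ℤ)) - 1) * (1 - (-exp ε) ^ (-2 : ℤ)) *
      ((1 - (-exp ε) ^ ((n : ℤ) - 2)) * (1 - (-exp ε) ^ ((n : ℤ) - 2 + 1)) *
        (1 - (-exp ε) ^ ((n : ℤ) - 2 + 2)) * (1 - (-exp ε) ^ ((n : ℤ) - 2 + 3)) *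
        (1 - (-exp ε) ^ ((n : ℤ) - 2 + 4))) *
      (1 - (-exp (β * ε)) * (-exp ε) ^ n) / qPoch (-exp ε) (-exp ε) 2 := by
  rw [A2, qPoch_zpow (neg_ne_zero.mpr (exp_ne_zero ε)), qPoch_one]
  simp only [Finset.prod_range_succ, Finset.prod_range_zero, one_mul]
  norm_num

lemma tendsto_one_sub_exp_mul_div (c : ℝ) :
    Tendsto (fun ε => (1 - exp (c * ε)) / ε) (𝓝[≠] 0) (𝓝 (-c)) := by
  have h : HasDerivAt (fun ε => 1 - exp (c * ε)) (-c) 0 := by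
    simpa using ((hasDerivAt_id (0 : ℝ)).const_mul c).exp.const_sub 1
  simpa [slope_fun_def_field] using h.tendsto_slope

lemma tendsto_neg_exp_sub_one : Tendsto (fun ε => -exp ε - 1) (𝓝[≠] 0) (𝓝 (-2)) :=
  ((continuous_exp.neg.sub continuous_const).tendsto' 0 (-2) (by norm_num)).mono_left
    nhdsWithin_le_nhds

lemma tendsto_neg_exp_zpow (m : ℤ) :
    Tendsto (fun ε => (-exp ε) ^ m) (𝓝[≠] 0) (𝓝 ((-1) ^ m)) := by
  have h : ContinuousAt (fun ε => (-exp ε) ^ m) 0 :=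
    continuous_exp.neg.continuousAt.zpow₀ m (Or.inl (by simp))
  simpa using h.tendsto.mono_left nhdsWithin_le_nhds

lemma tendsto_one_sub_neg_exp_zpow_of_odd {m : ℤ} (hm : Odd m) :
    Tendsto (fun ε => 1 - (-exp ε) ^ m) (𝓝[≠] 0) (𝓝 2) := by
  simpa [hm.neg_one_zpow, one_add_one_eq_two] using (tendsto_neg_exp_zpow m).const_sub 1

lemma tendsto_one_sub_neg_exp_zpow_div_of_even {m : ℤ} (hm : Even m) :
    Tendsto (fun ε => (1 - (-exp ε) ^ m) / ε) (𝓝[≠] 0) (𝓝 (-m)) := by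
  have h (ε : ℝ) : (-exp ε) ^ m = exp (m * ε) := by
    rw [hm.neg_zpow, ← rpow_intCast, ← exp_mul, mul_comm]
  simpa only [h] using tendsto_one_sub_exp_mul_div m

lemma div_div_pow_three_eq {ε : ℝ} (hε : ε ≠ 0) (x y : ℝ) :
    x / y / ε ^ 3 = x / ε ^ 4 / (y / ε) := by
  rw [pow_succ ε 3, ← div_div, div_div_div_cancel_right₀ hε, div_right_comm]

lemma tendsto_qPoch_neg_exp_self_two_div :
    Tendsto (fun ε => qPoch (-exp ε) (-exp ε) 2 / ε) (𝓝[≠] 0) (𝓝 (-4)) := by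
  have h := (tendsto_one_sub_neg_exp_zpow_of_odd (m := 1) (by decide)).mul
    (tendsto_one_sub_neg_exp_zpow_div_of_even (m := 2) (by decide))
  convert h using 2 with ε
  · simp only [qPoch, Finset.prod_range_succ, Finset.prod_range_zero, zpow_one, zpow_two]
    ring
  · norm_num

lemma tendsto_A2_div_cube_of_even (β M : ℝ) {n : ℕ} (hn : Even n) :
    Tendsto (fun ε => A2 β M n ε / ε ^ 3) (𝓝[≠] 0)
      (𝓝 (8 * M * n * (n + 2) * ((n : ℝ) - 2))) := by
  have h₀ : Even ((n : ℤ) - 2) := (hn.natCast (α := ℤ)).sub even_two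
  have h₁ : Odd ((n : ℤ) - 2 + 1) := h₀.add_one
  have h₂ : Even ((n : ℤ) - 2 + 2) := h₀.add even_two
  have h₃ : Odd ((n : ℤ) - 2 + 3) := h₀.add_odd (by decide)
  have h₄ : Even ((n : ℤ) - 2 + 4) := h₀.add (by decide)
  have hsign : Odd (3 * (2 - (n : ℤ)) - 1) :=
    ((even_two.sub (hn.natCast (α := ℤ))).mul_left 3).sub_odd odd_one
  have hpow := tendsto_neg_exp_zpow (3 * (2 - (n : ℤ)) - 1)
  rw [hsign.neg_one_zpow] at hpow
  have hb : Tendsto (fun ε => 1 - (-exp (β * ε)) * (-exp ε) ^ n) (𝓝[≠] 0) (𝓝 2) := by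
    refine (Continuous.tendsto' (by fun_prop) 0 2 ?_).mono_left nhdsWithin_le_nhds
    norm_num [hn.neg_pow]
  have h := ((((((((((tendsto_const_nhds (x := M)).mul tendsto_neg_exp_sub_one).mul hpow).mul
    (tendsto_one_sub_neg_exp_zpow_div_of_even (m := -2) (by decide))).mul
    (tendsto_one_sub_neg_exp_zpow_div_of_even h₀)).mul
    (tendsto_one_sub_neg_exp_zpow_of_odd h₁)).mul
    (tendsto_one_sub_neg_exp_zpow_div_of_even h₂)).mul
    (tendsto_one_sub_neg_exp_zpow_of_odd h₃)).mul
    (tendsto_one_sub_neg_exp_zpow_div_of_even h₄)).mul hb).div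
    tendsto_qPoch_neg_exp_self_two_div (by norm_num)
  convert h.congr' ?_ using 2
  · push_cast
    ring
  filter_upwards [self_mem_nhdsWithin] with ε (hε : ε ≠ 0)
  rw [Pi.div_apply, A2_eq, div_div_pow_three_eq hε]
  congr 1
  ring

lemma tendsto_A2_div_cube_of_odd (β M : ℝ) {n : ℕ} (hn : Odd n) :
    Tendsto (fun ε => A2 β M n ε / ε ^ 3) (𝓝[≠] 0)
      (𝓝 (-8 * M * (n + 1) * ((n : ℝ) - 1) * (n + β))) := by
  have h₀ : Odd ((n : ℤ) - 2) := (hn.natCast (R := ℤ)).sub_even even_two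
  have h₁ : Even ((n : ℤ) - 2 + 1) := h₀.add_one
  have h₂ : Odd ((n : ℤ) - 2 + 2) := h₀.add_even even_two
  have h₃ : Even ((n : ℤ) - 2 + 3) := h₀.add_odd (by decide)
  have h₄ : Odd ((n : ℤ) - 2 + 4) := h₀.add_even (by decide)
  have hsign : Even (3 * (2 - (n : ℤ)) - 1) :=
    ((by decide : Odd (3 : ℤ)).mul (even_two.sub_odd (hn.natCast (R := ℤ)))).sub_odd odd_one
  have hpow := tendsto_neg_exp_zpow (3 * (2 - (n : ℤ)) - 1)
  rw [hsign.neg_one_zpow] at hpow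
  have hb : Tendsto (fun ε => (1 - (-exp (β * ε)) * (-exp ε) ^ n) / ε) (𝓝[≠] 0)
      (𝓝 (-(n + β))) := by
    refine (tendsto_one_sub_exp_mul_div (n + β)).congr fun ε => ?_
    rw [hn.neg_pow, neg_mul_neg, ← exp_nat_mul, ← exp_add, add_mul, add_comm]
  have h := ((((((((((tendsto_const_nhds (x := M)).mul tendsto_neg_exp_sub_one).mul hpow).mul
    (tendsto_one_sub_neg_exp_zpow_div_of_even (m := -2) (by decide))).mul
    (tendsto_one_sub_neg_exp_zpow_of_odd h₀)).mul
    (tendsto_one_sub_neg_exp_zpow_div_of_even h₁)).mul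
    (tendsto_one_sub_neg_exp_zpow_of_odd h₂)).mul
    (tendsto_one_sub_neg_exp_zpow_div_of_even h₃)).mul
    (tendsto_one_sub_neg_exp_zpow_of_odd h₄)).mul hb).div
    tendsto_qPoch_neg_exp_self_two_div (by norm_num)
  convert h.congr' ?_ using 2
  · push_cast
    ring
  filter_upwards [self_mem_nhdsWithin] with ε (hε : ε ≠ 0)
  rw [Pi.div_apply, A2_eq, div_div_pow_three_eq hε]
  congr 1
  ring

/-- The `q → −1` limit of `A_n^{(2)}/ε³` under the parametrization
`q = −e^ε`, `b = −e^{βε}`, where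
`A_n^{(2)} = M(q−1) q^{3(2−n)−1} (1−q^{−2}) (q^{n−2};q)_5 (bq^n;q)_1 / (q;q)_2`:
the limit is `8Mn(n+2)(n−2)` for even `n` and `−8M(n+1)(n−1)(n+β)` for odd `n`. -/
theorem A2_limit (β M : ℝ) (n : ℕ) :
    Filter.Tendsto
      (fun ε : ℝ =>
        (let q : ℝ := -Real.exp ε
         let b : ℝ := -Real.exp (β * ε)
         M * (q - 1) * q ^ (3 * (2 - (n : ℤ)) - 1) * (1 - q ^ (-2 : ℤ)) *
           qPoch q (q ^ ((n : ℤ) - 2)) 5 * qPoch q (b * q ^ n) 1 / qPoch q q 2) / ε ^ 3)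
      (nhdsWithin 0 ({0}ᶜ : Set ℝ))
      (nhds (if Even n then
          8 * M * n * (n + 2) * ((n : ℝ) - 2)
        else
          -8 * M * (n + 1) * ((n : ℝ) - 1) * (n + β))) := by
  split_ifs with hn
  · exact tendsto_A2_div_cube_of_even β M hn
  · exact tendsto_A2_div_cube_of_odd β M (Nat.not_even_iff_odd.mp hn)
end

section
/- Fix a real number β with β + 2k + 1 ≠ 0 for all integers k ≥ 1, and an integer n ≥ 1. For ε ∈ ℝ, ε ≠ 0, set q = −e^{ε}, b = −e^{βε}. Then, as ε → 0 (ε ≠ 0), both (q²;q)_{2n}/(bq³;q)_{2n} and (q²;q)_{2n−1}/(bq³;q)_{2n−1} tend to the same limit n! / ∏_{k=0}^{n−1} ((β+3)/2 + k) (the denominators (bq³;q)_m being nonzero for all sufficiently small ε ≠ 0). -/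
open Filter Real Finset Topology

open scoped Nat

lemma qPoch_div_qPoch (q a b : ℝ) (m : ℕ) :
    qPoch q a m / qPoch q b m = ∏ k ∈ range m, (1 - a * q ^ k) / (1 - b * q ^ k) :=
  (prod_div_distrib ..).symm

lemma exp_mul_neg_exp_pow (α ε : ℝ) (k : ℕ) :
    exp (α * ε) * (-exp ε) ^ k = (-1) ^ k * exp ((α + k) * ε) := by
  rw [neg_pow, ← exp_nat_mul, add_mul, exp_add]
  ring

lemma tendsto_one_sub_exp_mul_div_self (a : ℝ) :
    Tendsto (fun ε => (1 - exp (a * ε)) / ε) (𝓝[≠] 0) (𝓝 (-a)) := by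
  have hderiv : HasDerivAt (fun ε => 1 - exp (a * ε)) (-a) 0 := by
    simpa using ((hasDerivAt_id (0 : ℝ)).const_mul a).exp.const_sub 1
  rw [hasDerivAt_iff_tendsto_slope] at hderiv
  exact hderiv.congr fun ε => by simp [slope_def_field]

lemma tendsto_one_sub_exp_div_one_sub_exp (a c : ℝ) (hc : c ≠ 0) :
    Tendsto (fun ε => (1 - exp (a * ε)) / (1 - exp (c * ε))) (𝓝[≠] 0) (𝓝 (a / c)) := by
  rw [← neg_div_neg_eq]
  refine ((tendsto_one_sub_exp_mul_div_self a).div (tendsto_one_sub_exp_mul_div_self c)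
    (neg_ne_zero.2 hc)).congr' ?_
  filter_upwards [self_mem_nhdsWithin] with ε hε
  exact div_div_div_cancel_right₀ hε _ _

lemma tendsto_one_add_exp_div_one_add_exp (a c : ℝ) :
    Tendsto (fun ε => (1 + exp (a * ε)) / (1 + exp (c * ε))) (𝓝 0) (𝓝 1) := by
  have hcont : Continuous fun ε => (1 + exp (a * ε)) / (1 + exp (c * ε)) :=
    (by fun_prop : Continuous fun ε => 1 + exp (a * ε)).div (by fun_prop) fun ε => by positivity
  simpa using hcont.tendsto 0

/-- The limit, as `ε → 0`, of the `k`-th factor `(1 - e^{αε} q^k) / (1 - e^{γε} q^k)`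
at `q = -e^ε`. -/
noncomputable def factorLimit (α γ : ℝ) (k : ℕ) : ℝ :=
  if Even k then (α + k) / (γ + k) else 1

lemma tendsto_qPoch_factor_div (α γ : ℝ) {k : ℕ} (hk : Even k → γ + k ≠ 0) :
    Tendsto (fun ε => (1 - exp (α * ε) * (-exp ε) ^ k) / (1 - exp (γ * ε) * (-exp ε) ^ k))
      (𝓝[≠] 0) (𝓝 (factorLimit α γ k)) := by
  simp only [exp_mul_neg_exp_pow, factorLimit]
  rcases Nat.even_or_odd k with hev | hodd
  · simpa [hev.neg_one_pow, hev] using tendsto_one_sub_exp_div_one_sub_exp _ _ (hk hev)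
  · simpa [hodd.neg_one_pow, Nat.not_even_iff_odd.2 hodd] using
      (tendsto_one_add_exp_div_one_add_exp (α + k) (γ + k)).mono_left nhdsWithin_le_nhds

lemma one_sub_exp_mul_neg_exp_pow_ne_zero {γ ε : ℝ} (hε : ε ≠ 0) {k : ℕ}
    (hk : Even k → γ + k ≠ 0) : 1 - exp (γ * ε) * (-exp ε) ^ k ≠ 0 := by
  rw [exp_mul_neg_exp_pow]
  rcases Nat.even_or_odd k with hev | hodd
  · rw [hev.neg_one_pow, one_mul, sub_ne_zero, ne_comm, Ne, exp_eq_one_iff]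
    exact mul_ne_zero (hk hev) hε
  · rw [hodd.neg_one_pow, neg_one_mul, sub_neg_eq_add]
    positivity

lemma qPoch_neg_exp_ne_zero {γ ε : ℝ} (hγ : ∀ k : ℕ, Even k → γ + k ≠ 0) (hε : ε ≠ 0)
    (m : ℕ) : qPoch (-exp ε) (exp (γ * ε)) m ≠ 0 :=
  prod_ne_zero_iff.2 fun k _ => one_sub_exp_mul_neg_exp_pow_ne_zero hε (hγ k)

lemma tendsto_qPoch_div_qPoch (α : ℝ) {γ : ℝ} (hγ : ∀ k : ℕ, Even k → γ + k ≠ 0) (m : ℕ) :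
    Tendsto (fun ε => qPoch (-exp ε) (exp (α * ε)) m / qPoch (-exp ε) (exp (γ * ε)) m)
      (𝓝[≠] 0) (𝓝 (∏ k ∈ range m, factorLimit α γ k)) := by
  simp only [qPoch_div_qPoch]
  exact tendsto_finsetProd _ fun k _ => tendsto_qPoch_factor_div α γ (hγ k)

lemma prod_range_two_mul_factorLimit (α γ : ℝ) (n : ℕ) :
    ∏ k ∈ range (2 * n), factorLimit α γ k = ∏ j ∈ range n, (α + 2 * j) / (γ + 2 * j) := by
  induction n with
  | zero => simp
  | succ n ih =>
    rw [prod_range_succ _ n, ← ih, show 2 * (n + 1) = 2 * n + 1 + 1 by ring, prod_range_succ,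
      prod_range_succ]
    simp [factorLimit]

lemma prod_range_two_mul_sub_one_factorLimit (α γ : ℝ) (n : ℕ) :
    ∏ k ∈ range (2 * n - 1), factorLimit α γ k = ∏ k ∈ range (2 * n), factorLimit α γ k := by
  rcases n with _ | n
  · rfl
  · rw [show 2 * (n + 1) = 2 * n + 1 + 1 by ring, Nat.add_sub_cancel,
      prod_range_succ _ (2 * n + 1)]
    simp [factorLimit]

lemma prod_range_two_add_two_mul_div (c : ℝ) (n : ℕ) :
    ∏ j ∈ range n, (2 + 2 * j : ℝ) / (c + 2 * j) = n ! / ∏ j ∈ range n, (c / 2 + j) := by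
  rw [← prod_range_add_one_eq_factorial, Nat.cast_prod, ← prod_div_distrib]
  refine prod_congr rfl fun j _ => ?_
  rw [show (2 + 2 * j : ℝ) = 2 * (j + 1) by ring, show c + 2 * j = 2 * (c / 2 + j) by ring,
    mul_div_mul_left _ _ two_ne_zero]
  push_cast
  rfl

theorem moments_limit_general (β : ℝ) (hβ : ∀ k : ℕ, 1 ≤ k → β + 2 * k + 1 ≠ 0)
    (n : ℕ) :
    (∀ᶠ ε : ℝ in nhdsWithin 0 ({0}ᶜ : Set ℝ),
        qPoch (-Real.exp ε) (-Real.exp (β * ε) * (-Real.exp ε) ^ 3) (2 * n) ≠ 0 ∧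
        qPoch (-Real.exp ε) (-Real.exp (β * ε) * (-Real.exp ε) ^ 3) (2 * n - 1) ≠ 0) ∧
    Filter.Tendsto
      (fun ε : ℝ =>
        qPoch (-Real.exp ε) ((-Real.exp ε) ^ 2) (2 * n) /
          qPoch (-Real.exp ε) (-Real.exp (β * ε) * (-Real.exp ε) ^ 3) (2 * n))
      (nhdsWithin 0 ({0}ᶜ : Set ℝ))
      (nhds ((n.factorial : ℝ) / ∏ k ∈ Finset.range n, ((β + 3) / 2 + k))) ∧
    Filter.Tendsto
      (fun ε : ℝ =>
        qPoch (-Real.exp ε) ((-Real.exp ε) ^ 2) (2 * n - 1) /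
          qPoch (-Real.exp ε) (-Real.exp (β * ε) * (-Real.exp ε) ^ 3) (2 * n - 1))
      (nhdsWithin 0 ({0}ᶜ : Set ℝ))
      (nhds ((n.factorial : ℝ) / ∏ k ∈ Finset.range n, ((β + 3) / 2 + k))) := by
  have hγ : ∀ k : ℕ, Even k → β + 3 + k ≠ 0 := by
    rintro _ ⟨j, rfl⟩
    convert hβ (j + 1) j.succ_pos using 1
    push_cast
    ring
  have hq2 (ε : ℝ) : (-exp ε) ^ 2 = exp (2 * ε) := by
    rw [neg_sq, ← exp_nat_mul]
    norm_num
  have hbq3 (ε : ℝ) : -exp (β * ε) * (-exp ε) ^ 3 = exp ((β + 3) * ε) := by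
    rw [neg_mul, exp_mul_neg_exp_pow]
    norm_num
  have hlim : ∏ k ∈ range (2 * n), factorLimit 2 (β + 3) k =
      n ! / ∏ k ∈ range n, ((β + 3) / 2 + k) := by
    rw [prod_range_two_mul_factorLimit, prod_range_two_add_two_mul_div]
  simp only [hq2, hbq3]
  refine ⟨?_, ?_, ?_⟩
  · filter_upwards [self_mem_nhdsWithin] with ε hε
    exact ⟨qPoch_neg_exp_ne_zero hγ hε _, qPoch_neg_exp_ne_zero hγ hε _⟩
  · exact hlim ▸ tendsto_qPoch_div_qPoch 2 hγ _
  · rw [← hlim, ← prod_range_two_mul_sub_one_factorLimit]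
    exact tendsto_qPoch_div_qPoch 2 hγ _

/-- `q → −1` limit of the normalized moments of the little q-Jacobi weight with
`a = q²`: under `q = −e^ε`, `b = −e^{βε}` (with `β + 2k + 1 ≠ 0` for all `k ≥ 1`),
the denominators `(bq³;q)_m` are nonzero for all sufficiently small `ε ≠ 0`, and both
`(q²;q)_{2n}/(bq³;q)_{2n}` and `(q²;q)_{2n−1}/(bq³;q)_{2n−1}` tend to
`n!/∏_{k=0}^{n−1}((β+3)/2+k)` as `ε → 0`. -/
theorem moments_limit (β : ℝ) (hβ : ∀ k : ℕ, 1 ≤ k → β + 2 * k + 1 ≠ 0)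
    (n : ℕ) (hn : 1 ≤ n) :
    (∀ᶠ ε : ℝ in nhdsWithin 0 ({0}ᶜ : Set ℝ),
        qPoch (-Real.exp ε) (-Real.exp (β * ε) * (-Real.exp ε) ^ 3) (2 * n) ≠ 0 ∧
        qPoch (-Real.exp ε) (-Real.exp (β * ε) * (-Real.exp ε) ^ 3) (2 * n - 1) ≠ 0) ∧
    Filter.Tendsto
      (fun ε : ℝ =>
        qPoch (-Real.exp ε) ((-Real.exp ε) ^ 2) (2 * n) /
          qPoch (-Real.exp ε) (-Real.exp (β * ε) * (-Real.exp ε) ^ 3) (2 * n))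
      (nhdsWithin 0 ({0}ᶜ : Set ℝ))
      (nhds ((n.factorial : ℝ) / ∏ k ∈ Finset.range n, ((β + 3) / 2 + k))) ∧
    Filter.Tendsto
      (fun ε : ℝ =>
        qPoch (-Real.exp ε) ((-Real.exp ε) ^ 2) (2 * n - 1) /
          qPoch (-Real.exp ε) (-Real.exp (β * ε) * (-Real.exp ε) ^ 3) (2 * n - 1))
      (nhdsWithin 0 ({0}ᶜ : Set ℝ))
      (nhds ((n.factorial : ℝ) / ∏ k ∈ Finset.range n, ((β + 3) / 2 + k))) :=
  moments_limit_general β hβ n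
end
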